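/- arXiv:2509.10337 — 3 statements merged into one kernel-verified Lean document; each statement's English description precedes it below -/
import Mathlib

section
/- For any c > 0 and a > 1, the improper integral ∫₀^∞ (x^{−a}·c²)/(x^{−a}+c)² dx is finite and equals a constant depending only on a times c^{(a−1)/a}. -/
open MeasureTheory Set

/-!
Write `g y = y^{-a} / (y^{-a} + 1)^2`. For `k = c^{1/a}` one has `(k x)^{-a} = x^{-a} / c`, so the
integrand equals `c · g (k x)`. The substitution `y = k x` turns the integral into
`c k⁻¹ ∫₀^∞ g = c^{(a-1)/a} ∫₀^∞ g`, and `g` is integrable on `(0, ∞)` because `g ≤ 1` near `0`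
and `g y ≤ y^{-a}` near `∞`, where `a > 1`.
-/

lemma div_add_one_sq_le_one {t : ℝ} (ht : 0 ≤ t) : t / (t + 1) ^ 2 ≤ 1 := by
  rw [div_le_one (by positivity)]
  nlinarith

lemma div_add_one_sq_le_self {t : ℝ} (ht : 0 ≤ t) : t / (t + 1) ^ 2 ≤ t := by
  rw [div_le_iff₀ (by positivity)]
  nlinarith [mul_nonneg ht (by positivity : 0 ≤ t ^ 2 + 2 * t)]

lemma integrableOn_rpow_neg_div_add_one_sq {a : ℝ} (ha : 1 < a) :
    IntegrableOn (fun y : ℝ => y ^ (-a) / (y ^ (-a) + 1) ^ 2) (Ioi 0) := by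
  have hmeas : Measurable (fun y : ℝ => y ^ (-a) / (y ^ (-a) + 1) ^ 2) := by fun_prop
  have near_zero : IntegrableOn (fun y : ℝ => y ^ (-a) / (y ^ (-a) + 1) ^ 2) (Ioc 0 1) := by
    refine Integrable.mono' (integrable_const (1 : ℝ)) hmeas.aestronglyMeasurable.restrict ?_
    filter_upwards [ae_restrict_mem measurableSet_Ioc] with y hy
    have hpos : 0 ≤ y ^ (-a) := Real.rpow_nonneg hy.1.le _
    rw [Real.norm_of_nonneg (by positivity)]
    exact div_add_one_sq_le_one hpos
  have near_top : IntegrableOn (fun y : ℝ => y ^ (-a) / (y ^ (-a) + 1) ^ 2) (Ioi 1) := by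
    refine Integrable.mono' (integrableOn_Ioi_rpow_of_lt (by linarith : -a < -1) one_pos)
      hmeas.aestronglyMeasurable.restrict ?_
    filter_upwards [ae_restrict_mem measurableSet_Ioi] with y hy
    have hpos : 0 ≤ y ^ (-a) := Real.rpow_nonneg (zero_le_one.trans hy.le) _
    rw [Real.norm_of_nonneg (by positivity)]
    exact div_add_one_sq_le_self hpos
  simpa only [Ioc_union_Ioi_eq_Ioi zero_le_one] using near_zero.union near_top

lemma rpow_neg_mul_sq_div_add_sq_eq {a c x : ℝ} (ha : a ≠ 0) (hc : 0 < c) (hx : 0 < x) :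
    x ^ (-a) * c ^ 2 / (x ^ (-a) + c) ^ 2 =
      c * ((c ^ a⁻¹ * x) ^ (-a) / ((c ^ a⁻¹ * x) ^ (-a) + 1) ^ 2) := by
  have hscale : (c ^ a⁻¹ * x) ^ (-a) = c⁻¹ * x ^ (-a) := by
    rw [Real.mul_rpow (Real.rpow_nonneg hc.le _) hx.le, ← Real.rpow_mul hc.le,
      show a⁻¹ * (-a) = -1 by field_simp, Real.rpow_neg_one]
  have hpos : 0 < x ^ (-a) := Real.rpow_pos_of_pos hx _
  rw [hscale]
  field_simp

lemma mul_inv_rpow_inv_eq {a c : ℝ} (ha : a ≠ 0) (hc : 0 < c) :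
    c * (c ^ a⁻¹)⁻¹ = c ^ ((a - 1) / a) := by
  rw [← Real.rpow_neg hc.le]
  nth_rewrite 1 [← Real.rpow_one c]
  rw [← Real.rpow_add hc]
  congr 1
  field_simp
  ring

/-- For `a > 1`, `∫₀^∞ x^{-a} c² / (x^{-a} + c)² dx` is finite and equals a constant
depending only on `a` times `c^{(a-1)/a}`, for every `c > 0`. -/
theorem stmt2 (a : ℝ) (ha : 1 < a) :
    ∃ C : ℝ, ∀ c : ℝ, 0 < c →
      IntegrableOn (fun x : ℝ => x ^ (-a) * c ^ 2 / (x ^ (-a) + c) ^ 2) (Ioi 0) ∧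
      ∫ x in Ioi (0 : ℝ), x ^ (-a) * c ^ 2 / (x ^ (-a) + c) ^ 2 =
        C * c ^ ((a - 1) / a) := by
  set g : ℝ → ℝ := fun y => y ^ (-a) / (y ^ (-a) + 1) ^ 2
  have ha0 : a ≠ 0 := by positivity
  refine ⟨∫ y in Ioi 0, g y, fun c hc => ?_⟩
  have hk : 0 < c ^ a⁻¹ := Real.rpow_pos_of_pos hc _
  have hscale : EqOn (fun x : ℝ => x ^ (-a) * c ^ 2 / (x ^ (-a) + c) ^ 2)
      (fun x => c * g (c ^ a⁻¹ * x)) (Ioi 0) :=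
    fun x hx => rpow_neg_mul_sq_div_add_sq_eq ha0 hc hx
  have hg_comp : IntegrableOn (fun x => g (c ^ a⁻¹ * x)) (Ioi 0) := by
    refine (integrableOn_Ioi_comp_mul_left_iff g 0 hk).2 ?_
    simpa only [mul_zero] using integrableOn_rpow_neg_div_add_one_sq ha
  refine ⟨IntegrableOn.congr_fun (hg_comp.const_mul c) hscale.symm measurableSet_Ioi, ?_⟩
  rw [setIntegral_congr_fun measurableSet_Ioi hscale, integral_const_mul,
    integral_comp_mul_left_Ioi g 0 hk, mul_zero, smul_eq_mul, ← mul_assoc,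
    mul_inv_rpow_inv_eq ha0 hc, mul_comm]
end

section
/- For any c > 0 and exponents a > 1, b with 1 < b < 1 + 2a, the improper integral ∫₀^∞ (x^{−b}·c²)/(x^{−a}+c)² dx is finite and scales, up to constants depending only on a and b, as c^{(b−1)/a}. -/
open MeasureTheory Set Real

/-! The substitution `x = c^{-1/a} y` turns the integral into `c^{(b-1)/a}` times the same
integral at `c = 1`, so both constants can be taken equal to the value at `c = 1`. That value
is finite because the biasIntegrand is at most `y^{2a-b}` near `0` and at most `y^{-b}` near `∞`. -/

noncomputable def biasIntegrand (a b c x : ℝ) : ℝ := x ^ (-b) * c ^ 2 / (x ^ (-a) + c) ^ 2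

section

variable {a b c x : ℝ}

lemma biasIntegrand_pos (hc : 0 < c) (hx : 0 < x) : 0 < biasIntegrand a b c x := by
  unfold biasIntegrand; positivity

lemma continuousOn_biasIntegrand (hc : 0 ≤ c) : ContinuousOn (biasIntegrand a b c) (Ioi 0) := by
  intro x (hx : 0 < x)
  have hden : (x ^ (-a) + c) ^ 2 ≠ 0 := by positivity
  unfold biasIntegrand
  fun_prop (disch := first | exact hden | exact Or.inl hx.ne')

lemma biasIntegrand_one_le_rpow_neg (hx : 0 < x) : biasIntegrand a b 1 x ≤ x ^ (-b) := by
  have : 1 ≤ (x ^ (-a) + 1) ^ 2 := by nlinarith [rpow_pos_of_pos hx (-a)]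
  unfold biasIntegrand
  rw [one_pow, mul_one]
  exact div_le_self (by positivity) this

lemma biasIntegrand_one_le_rpow_sub (hx : 0 < x) : biasIntegrand a b 1 x ≤ x ^ (2 * a - b) := by
  have hxa := rpow_pos_of_pos hx (-a)
  have hsq : x ^ (2 * a - b) = x ^ (-b) / (x ^ (-a)) ^ 2 := by
    rw [← rpow_natCast, ← rpow_mul hx.le, ← rpow_sub hx]
    ring_nf
  unfold biasIntegrand
  rw [one_pow, mul_one, hsq]
  gcongr
  linarith

lemma integrableOn_biasIntegrand_one (hb1 : 1 < b) (hb2 : b < 1 + 2 * a) :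
    IntegrableOn (biasIntegrand a b 1) (Ioi 0) := by
  have hmeas : ∀ s ⊆ Ioi (0 : ℝ), MeasurableSet s →
      AEStronglyMeasurable (biasIntegrand a b 1) (volume.restrict s) :=
    fun s hs hms => ((continuousOn_biasIntegrand zero_le_one).mono hs).aestronglyMeasurable hms
  have hnear : IntegrableOn (biasIntegrand a b 1) (Ioc 0 1) := by
    have hdom : IntegrableOn (fun y : ℝ => y ^ (2 * a - b)) (Ioc 0 1) := by
      rw [← intervalIntegrable_iff_integrableOn_Ioc_of_le zero_le_one]
      exact intervalIntegral.intervalIntegrable_rpow' (by linarith)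
    refine hdom.integrable.mono (hmeas _ Ioc_subset_Ioi_self measurableSet_Ioc) ?_
    filter_upwards [ae_restrict_mem measurableSet_Ioc] with y hy
    replace hy : 0 < y := hy.1
    rw [norm_of_nonneg (biasIntegrand_pos one_pos hy).le, norm_of_nonneg (rpow_pos_of_pos hy _).le]
    exact biasIntegrand_one_le_rpow_sub hy
  have hfar : IntegrableOn (biasIntegrand a b 1) (Ioi 1) := by
    have hdom : IntegrableOn (fun y : ℝ => y ^ (-b)) (Ioi 1) :=
      integrableOn_Ioi_rpow_of_lt (by linarith) one_pos
    refine hdom.integrable.mono (hmeas _ (Ioi_subset_Ioi zero_le_one) measurableSet_Ioi) ?_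
    filter_upwards [ae_restrict_mem measurableSet_Ioi] with y (hy : 1 < y)
    have hy0 : 0 < y := one_pos.trans hy
    rw [norm_of_nonneg (biasIntegrand_pos one_pos hy0).le,
      norm_of_nonneg (rpow_pos_of_pos hy0 _).le]
    exact biasIntegrand_one_le_rpow_neg hy0
  rw [← Ioc_union_Ioi_eq_Ioi zero_le_one]
  exact hnear.union hfar

lemma integral_biasIntegrand_one_pos (hb1 : 1 < b) (hb2 : b < 1 + 2 * a) :
    0 < ∫ x in Ioi 0, biasIntegrand a b 1 x := by
  rw [setIntegral_pos_iff_support_of_nonneg_ae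
    ((ae_restrict_mem measurableSet_Ioi).mono fun x hx => (biasIntegrand_pos one_pos hx).le)
    (integrableOn_biasIntegrand_one hb1 hb2)]
  calc (0 : ENNReal) < volume (Ioi (0 : ℝ)) := by simp
    _ ≤ _ := measure_mono fun x (hx : 0 < x) =>
      show x ∈ Function.support _ ∩ Ioi 0 from ⟨(biasIntegrand_pos one_pos hx).ne', hx⟩

lemma biasIntegrand_eq_rescale (ha : a ≠ 0) (hc : 0 < c) (hx : 0 < x) :
    biasIntegrand a b c x = (c ^ a⁻¹) ^ b * biasIntegrand a b 1 (c ^ a⁻¹ * x) := by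
  set t := c ^ a⁻¹
  have ht : 0 < t := rpow_pos_of_pos hc _
  have hta : t ^ (-a) = c⁻¹ := by
    rw [← rpow_mul hc.le, inv_mul_eq_div, neg_div_self ha, rpow_neg_one]
  have htb : t ^ b * t ^ (-b) = 1 := by rw [← rpow_add ht, add_neg_cancel, rpow_zero]
  have hxa := rpow_pos_of_pos hx (-a)
  unfold biasIntegrand
  rw [mul_rpow ht.le hx.le, mul_rpow ht.le hx.le, hta]
  field_simp
  exact htb.symm

lemma integrableOn_biasIntegrand (ha : a ≠ 0) (hb1 : 1 < b) (hb2 : b < 1 + 2 * a) (hc : 0 < c) :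
    IntegrableOn (biasIntegrand a b c) (Ioi 0) := by
  have ht : 0 < c ^ a⁻¹ := rpow_pos_of_pos hc _
  have hscaled :
      IntegrableOn (fun x => (c ^ a⁻¹) ^ b * biasIntegrand a b 1 (c ^ a⁻¹ * x)) (Ioi 0) :=
    ((integrableOn_Ioi_comp_mul_left_iff _ 0 ht).mpr
      (by simpa using integrableOn_biasIntegrand_one hb1 hb2)).integrable.const_mul _
  exact hscaled.congr_fun (fun x hx => (biasIntegrand_eq_rescale ha hc hx).symm)
    measurableSet_Ioi

lemma integral_biasIntegrand (ha : a ≠ 0) (hc : 0 < c) :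
    ∫ x in Ioi 0, biasIntegrand a b c x =
      (∫ x in Ioi 0, biasIntegrand a b 1 x) * c ^ ((b - 1) / a) := by
  have ht : 0 < c ^ a⁻¹ := rpow_pos_of_pos hc _
  have hpow : (c ^ a⁻¹) ^ b * (c ^ a⁻¹)⁻¹ = c ^ ((b - 1) / a) := by
    rw [← rpow_neg_one (c ^ a⁻¹), ← rpow_add ht, ← rpow_mul hc.le, ← sub_eq_add_neg,
      inv_mul_eq_div]
  rw [setIntegral_congr_fun measurableSet_Ioi fun x hx => biasIntegrand_eq_rescale ha hc hx,
    integral_const_mul, integral_comp_mul_left_Ioi _ 0 ht, mul_zero, smul_eq_mul, ← hpow]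
  ring

end

theorem stmt3_general (a b : ℝ) (hb1 : 1 < b) (hb2 : b < 1 + 2 * a) :
    ∃ C₁ C₂ : ℝ, 0 < C₁ ∧ 0 < C₂ ∧ ∀ c : ℝ, 0 < c →
      IntegrableOn (fun x : ℝ => x ^ (-b) * c ^ 2 / (x ^ (-a) + c) ^ 2) (Ioi 0) ∧
      C₁ * c ^ ((b - 1) / a) ≤
        (∫ x in Ioi (0 : ℝ), x ^ (-b) * c ^ 2 / (x ^ (-a) + c) ^ 2) ∧
      (∫ x in Ioi (0 : ℝ), x ^ (-b) * c ^ 2 / (x ^ (-a) + c) ^ 2) ≤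
        C₂ * c ^ ((b - 1) / a) := by
  have ha0 : a ≠ 0 := by linarith
  have hI := integral_biasIntegrand_one_pos hb1 hb2
  refine ⟨_, _, hI, hI, fun c hc => ?_⟩
  have hval := integral_biasIntegrand (b := b) ha0 hc
  exact ⟨integrableOn_biasIntegrand ha0 hb1 hb2 hc, hval.ge, hval.le⟩

/-- For `a > 1`, `1 < b < 1 + 2a`, the integral `∫₀^∞ x^{-b} c² / (x^{-a} + c)² dx` is finite
and scales, up to positive constants depending only on `a` and `b`, as `c^{(b-1)/a}`. -/
theorem stmt3 (a b : ℝ) (ha : 1 < a) (hb1 : 1 < b) (hb2 : b < 1 + 2 * a) :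
    ∃ C₁ C₂ : ℝ, 0 < C₁ ∧ 0 < C₂ ∧ ∀ c : ℝ, 0 < c →
      IntegrableOn (fun x : ℝ => x ^ (-b) * c ^ 2 / (x ^ (-a) + c) ^ 2) (Ioi 0) ∧
      C₁ * c ^ ((b - 1) / a) ≤
        (∫ x in Ioi (0 : ℝ), x ^ (-b) * c ^ 2 / (x ^ (-a) + c) ^ 2) ∧
      (∫ x in Ioi (0 : ℝ), x ^ (-b) * c ^ 2 / (x ^ (-a) + c) ^ 2) ≤
        C₂ * c ^ ((b - 1) / a) :=
  stmt3_general a b hb1 hb2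
end

section
/- Fix s₁,…,s_m ≥ 0 (not all equal) and c > 0. Define F(t) = Σ_{i=1}^m [ t·c/(t+c) − (t − sᵢ)·c²/(t+c)² ] for t ≥ 0. Then F is minimized at t = (1/m)Σᵢ sᵢ, and the minimum value equals (Σᵢ sᵢ)·c / ( (1/m)Σᵢ sᵢ + c ). -/
/-!
Over a common denominator each summand is `c (t² + sᵢ c) / (t + c)²`, which is affine in `sᵢ`,
so `F(t) = m · c (t² + μ c) / (t + c)²` with `μ` the mean of the `sᵢ`. For this single-signal
error, `c (t² + μ c) / (t + c)² − c μ / (μ + c) = c² (t − μ)² / ((t + c)² (μ + c)) ≥ 0`.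
-/

open Finset

noncomputable def filterError (c a t : ℝ) : ℝ := c * (t ^ 2 + a * c) / (t + c) ^ 2

lemma filterError_eq {c t : ℝ} (a : ℝ) (htc : t + c ≠ 0) :
    t * c / (t + c) - (t - a) * c ^ 2 / (t + c) ^ 2 = filterError c a t := by
  unfold filterError
  field_simp
  ring

lemma card_mul_mean_eq_sum {m : ℕ} (s : Fin m → ℝ) : (m : ℝ) * ((∑ i, s i) / m) = ∑ i, s i :=
  mul_div_cancel_of_imp' fun hm => by
    obtain rfl : m = 0 := by exact_mod_cast hm
    simp

lemma sum_filterError_eq_card_mul {m : ℕ} (s : Fin m → ℝ) (c t : ℝ) :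
    ∑ i, filterError c (s i) t = m * filterError c ((∑ i, s i) / m) t := by
  have hsum : ∑ i, (t ^ 2 + s i * c) = m * (t ^ 2 + (∑ i, s i) / m * c) := by
    rw [sum_add_distrib, sum_const, card_univ, Fintype.card_fin, nsmul_eq_mul, ← sum_mul,
      mul_add, ← mul_assoc, card_mul_mean_eq_sum]
  simp only [filterError, ← sum_div, ← mul_sum, hsum]
  ring

lemma filterError_self {c a : ℝ} (hac : a + c ≠ 0) : filterError c a a = c * a / (a + c) := by
  unfold filterError
  field_simp

lemma filterError_sub_filterError_self {c a t : ℝ} (hac : a + c ≠ 0) (htc : t + c ≠ 0) :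
    filterError c a t - filterError c a a = c ^ 2 * (t - a) ^ 2 / ((t + c) ^ 2 * (a + c)) := by
  rw [filterError_self hac]
  unfold filterError
  field_simp
  ring

lemma filterError_self_le {c a t : ℝ} (hac : 0 < a + c) (htc : t + c ≠ 0) :
    filterError c a a ≤ filterError c a t := by
  have hdiff := filterError_sub_filterError_self hac.ne' htc
  have hnonneg : 0 ≤ c ^ 2 * (t - a) ^ 2 / ((t + c) ^ 2 * (a + c)) := by positivity
  linarith

theorem stmt9_general (m : ℕ) (s : Fin m → ℝ) (hs : ∀ i, 0 ≤ s i)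
    (c : ℝ) (hc : 0 < c)
    (F : ℝ → ℝ)
    (hF : ∀ t, F t = ∑ i, (t * c / (t + c) - (t - s i) * c ^ 2 / (t + c) ^ 2)) :
    (∀ t, 0 ≤ t → F ((∑ i, s i) / m) ≤ F t) ∧
    F ((∑ i, s i) / m) = (∑ i, s i) * c / ((∑ i, s i) / m + c) := by
  set μ := (∑ i, s i) / m
  have hμ : 0 ≤ μ := div_nonneg (sum_nonneg fun i _ => hs i) m.cast_nonneg
  have hμc : 0 < μ + c := by linarith
  have hF' : ∀ t, 0 ≤ t → F t = m * filterError c μ t := fun t ht => by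
    rw [hF, ← sum_filterError_eq_card_mul]
    exact sum_congr rfl fun i _ => filterError_eq (s i) (by linarith)
  refine ⟨fun t ht => ?_, ?_⟩
  · rw [hF' μ hμ, hF' t ht]
    exact mul_le_mul_of_nonneg_left (filterError_self_le hμc (by linarith)) m.cast_nonneg
  · have hS : m * μ = ∑ i, s i := card_mul_mean_eq_sum s
    rw [hF' μ hμ, filterError_self hμc.ne', ← hS]
    ring

/-- The best single spectral value for a group of repeated eigenvalues: for `sᵢ ≥ 0` not all
equal and `c > 0`, `F(t) = Σᵢ [tc/(t+c) − (t − sᵢ)c²/(t+c)²]` is minimized over `t ≥ 0` at the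
mean `t = (1/m)Σᵢ sᵢ`, with minimum value `(Σᵢ sᵢ)·c / ((1/m)Σᵢ sᵢ + c)`. -/
theorem stmt9 (m : ℕ) (s : Fin m → ℝ) (hs : ∀ i, 0 ≤ s i)
    (hne : ∃ i j, s i ≠ s j) (c : ℝ) (hc : 0 < c)
    (F : ℝ → ℝ)
    (hF : ∀ t, F t = ∑ i, (t * c / (t + c) - (t - s i) * c ^ 2 / (t + c) ^ 2)) :
    (∀ t, 0 ≤ t → F ((∑ i, s i) / m) ≤ F t) ∧
    F ((∑ i, s i) / m) = (∑ i, s i) * c / ((∑ i, s i) / m + c) :=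
  stmt9_general m s hs c hc F hF
end
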